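/- arXiv:1403.0850 — 4 statements merged into one kernel-verified Lean document; each statement's English description precedes it below -/
import Mathlib

section
/- Let f : Finset V → ℝ be a nonnegative, monotone, submodular set function with f(∅) = 0, and let K be a positive integer. If G ⊆ V is produced by the greedy algorithm that, starting from the empty set, repeatedly adds an element maximizing the marginal gain until |G| = K, then f(G) ≥ (1 - 1/e) · max{ f(S) : S ⊆ V, |S| ≤ K }. -/
open Finset

/-- Nemhauser–Wolsey–Fisher: greedy achieves a (1 - 1/e) approximation for
maximizing a nonnegative monotone submodular function under a cardinality constraint. -/
theorem greedy_one_sub_inv_e_approx {V : Type*} [DecidableEq V] [Fintype V]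
    (f : Finset V → ℝ)
    (hnonneg : ∀ S : Finset V, 0 ≤ f S)
    (hmono : ∀ S T : Finset V, S ⊆ T → f S ≤ f T)
    (hsub : ∀ S T : Finset V, S ⊆ T → ∀ z ∉ T,
      f (insert z T) - f T ≤ f (insert z S) - f S)
    (hempty : f ∅ = 0)
    (K : ℕ) (hK : 0 < K)
    (g : ℕ → Finset V) (hg0 : g 0 = ∅)
    (hstep : ∀ i < K, ∃ z : V, z ∉ g i ∧ g (i + 1) = insert z (g i) ∧
      ∀ y : V, f (insert y (g i)) ≤ f (insert z (g i)))
    (S : Finset V) (hS : S.card ≤ K) :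
    (1 - 1 / Real.exp 1) * f S ≤ f (g K) := by
  have hKpos : (0:ℝ) < K := by exact_mod_cast hK
  have hc : 0 ≤ 1 - 1/(K:ℝ) := by
    have : 1/(K:ℝ) ≤ 1 := by
      rw [div_le_one hKpos]; exact_mod_cast hK
    linarith
  -- telescoping submodularity bound
  have key : ∀ (A T : Finset V), f (A ∪ T) - f A ≤ ∑ z ∈ T, (f (insert z A) - f A) := by
    intro A T
    induction T using Finset.induction_on with
    | empty => simp
    | @insert z T' hz ih =>
      rw [Finset.sum_insert hz, Finset.union_insert]
      have hfirst : f (insert z (A ∪ T')) - f (A ∪ T') ≤ f (insert z A) - f A := by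
        by_cases hmem : z ∈ A ∪ T'
        · rw [Finset.insert_eq_self.mpr hmem]
          have := hmono A (insert z A) (Finset.subset_insert _ _)
          linarith
        · exact hsub A (A ∪ T') Finset.subset_union_left z hmem
      linarith
  -- per-step contraction
  have step : ∀ i < K, f S - f (g (i+1)) ≤ (1 - 1/(K:ℝ)) * (f S - f (g i)) := by
    intro i hi
    obtain ⟨z, hz, hgi1, hmax⟩ := hstep i hi
    have hMnn : 0 ≤ f (g (i+1)) - f (g i) := by
      have := hmono (g i) (g (i+1)) (by rw [hgi1]; exact Finset.subset_insert _ _)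
      linarith
    have h1 : f S - f (g i) ≤ (K:ℝ) * (f (g (i+1)) - f (g i)) := by
      have hA := key (g i) S
      have hsum : ∑ z' ∈ S, (f (insert z' (g i)) - f (g i)) ≤
          S.card • (f (g (i+1)) - f (g i)) := by
        apply Finset.sum_le_card_nsmul
        intro x _
        have := hmax x
        rw [hgi1]
        linarith
      have hmS : f S ≤ f (g i ∪ S) := hmono _ _ Finset.subset_union_right
      have hcard : (S.card : ℝ) * (f (g (i+1)) - f (g i)) ≤ (K:ℝ) * (f (g (i+1)) - f (g i)) := by
        apply mul_le_mul_of_nonneg_right _ hMnn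
        exact_mod_cast hS
      rw [nsmul_eq_mul] at hsum
      linarith
    have hdiv : (f S - f (g i)) / (K:ℝ) ≤ f (g (i+1)) - f (g i) := by
      rw [div_le_iff₀ hKpos]; linarith [h1]
    have hring : (1 - 1/(K:ℝ)) * (f S - f (g i)) = (f S - f (g i)) - (f S - f (g i)) / K := by
      ring
    rw [hring]; linarith
  -- iterate
  have iter : ∀ i, i ≤ K → f S - f (g i) ≤ (1 - 1/(K:ℝ))^i * f S := by
    intro i
    induction i with
    | zero => intro _; simp [hg0, hempty]
    | succ n ih =>
      intro hn
      have h1 := step n (by omega)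
      have h2 := ih (by omega)
      have h3 := mul_le_mul_of_nonneg_left h2 hc
      calc f S - f (g (n+1)) ≤ (1 - 1/(K:ℝ)) * (f S - f (g n)) := h1
      _ ≤ (1 - 1/(K:ℝ)) * ((1 - 1/(K:ℝ))^n * f S) := h3
      _ = (1 - 1/(K:ℝ))^(n+1) * f S := by ring
  have hfin := iter K le_rfl
  -- (1 - 1/K)^K ≤ exp (-1)
  have hpow : (1 - 1/(K:ℝ))^K ≤ Real.exp (-1) := by
    have h1 : (1 - 1/(K:ℝ)) ≤ Real.exp (-(1/(K:ℝ))) := by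
      have := Real.add_one_le_exp (-(1/(K:ℝ)))
      linarith
    have h2 : (1 - 1/(K:ℝ))^K ≤ (Real.exp (-(1/(K:ℝ))))^K :=
      pow_le_pow_left₀ hc h1 K
    have h3 : (Real.exp (-(1/(K:ℝ))))^K = Real.exp (-1) := by
      rw [← Real.exp_nat_mul]
      congr 1
      field_simp
    rw [h3] at h2; exact h2
  have hmul : (1 - 1/(K:ℝ))^K * f S ≤ Real.exp (-1) * f S :=
    mul_le_mul_of_nonneg_right hpow (hnonneg S)
  have hinv : 1 / Real.exp 1 = Real.exp (-1) := by
    rw [Real.exp_neg, one_div]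
  have hg : (1 - 1/Real.exp 1) * f S = f S - Real.exp (-1) * f S := by
    rw [hinv]; ring
  linarith
end

section
/- Let f : Finset V → ℝ be a nonnegative, monotone, submodular function with f(∅)=0, and suppose the greedy algorithm at each of K steps selects an element whose marginal gain is at least (1-ε) times the best marginal gain at that step (0 ≤ ε < 1). Then the resulting set G of size K satisfies f(G) ≥ (1 - e^{-(1-ε)}) · max{ f(S) : |S| ≤ K }. -/
open Finset

/-!
Submodularity bounds `f (A ∪ S) - f A` by the sum of the `|S| ≤ K` marginal gains of the
elements of `S` over `A`, each of which is at most `1 / (1 - ε)` times the gain of the greedy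
choice. Hence each step shrinks the gap `f S - f (g i)` by the factor `1 - (1 - ε) / K`, and after
`K` steps the gap is at most `(1 - (1 - ε) / K) ^ K * f S ≤ exp (-(1 - ε)) * f S`.
-/

section Submodular

variable {V : Type*} [DecidableEq V] {f : Finset V → ℝ}

theorem le_add_sum_marginal_of_submodular
    (hmono : ∀ S T : Finset V, S ⊆ T → f S ≤ f T)
    (hsub : ∀ S T : Finset V, S ⊆ T → ∀ z ∉ T,
      f (insert z T) - f T ≤ f (insert z S) - f S)
    (A T : Finset V) :
    f (A ∪ T) ≤ f A + ∑ y ∈ T, (f (insert y A) - f A) := by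
  induction T using Finset.induction_on with
  | empty => simp
  | insert a T haT ih =>
    rw [sum_insert haT, union_insert]
    have hgain : f (insert a (A ∪ T)) - f (A ∪ T) ≤ f (insert a A) - f A := by
      by_cases ha : a ∈ A ∪ T
      · rw [insert_eq_of_mem ha, sub_self, sub_nonneg]
        exact hmono _ _ (subset_insert a A)
      · exact hsub A (A ∪ T) subset_union_left a ha
    linarith

theorem gap_insert_le_of_approx_best
    (hmono : ∀ S T : Finset V, S ⊆ T → f S ≤ f T)
    (hsub : ∀ S T : Finset V, S ⊆ T → ∀ z ∉ T,
      f (insert z T) - f T ≤ f (insert z S) - f S)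
    {ε : ℝ} (hε1 : ε < 1) {K : ℕ} (hK : 0 < K) {S : Finset V} (hS : S.card ≤ K)
    {A : Finset V} {z : V}
    (hbest : ∀ y : V, (1 - ε) * (f (insert y A) - f A) ≤ f (insert z A) - f A) :
    f S - f (insert z A) ≤ (1 - (1 - ε) / K) * (f S - f A) := by
  set Δ := f (insert z A) - f A
  have hΔ : 0 ≤ Δ := sub_nonneg.mpr (hmono _ _ (subset_insert z A))
  have hsum : (1 - ε) * ∑ y ∈ S, (f (insert y A) - f A) ≤ S.card * Δ := by
    rw [mul_sum, ← nsmul_eq_mul, ← sum_const]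
    exact sum_le_sum fun y _ ↦ hbest y
  have hgap : f S - f A ≤ ∑ y ∈ S, (f (insert y A) - f A) := by
    linarith [hmono S (A ∪ S) subset_union_right, le_add_sum_marginal_of_submodular hmono hsub A S]
  have hKΔ : (1 - ε) * (f S - f A) ≤ K * Δ := calc
    (1 - ε) * (f S - f A) ≤ (1 - ε) * ∑ y ∈ S, (f (insert y A) - f A) :=
      mul_le_mul_of_nonneg_left hgap (by linarith)
    _ ≤ S.card * Δ := hsum
    _ ≤ K * Δ := mul_le_mul_of_nonneg_right (by exact_mod_cast hS) hΔ
  have hKpos : (0 : ℝ) < K := by exact_mod_cast hK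
  have hstep : (1 - ε) / K * (f S - f A) ≤ Δ := by
    rw [div_mul_eq_mul_div, div_le_iff₀ hKpos]
    linarith
  linarith

end Submodular

theorem approx_greedy_bound_general {V : Type*} [DecidableEq V]
    (f : Finset V → ℝ)
    (hmono : ∀ S T : Finset V, S ⊆ T → f S ≤ f T)
    (hsub : ∀ S T : Finset V, S ⊆ T → ∀ z ∉ T,
      f (insert z T) - f T ≤ f (insert z S) - f S)
    (hempty : f ∅ = 0)
    (ε : ℝ) (hε0 : 0 ≤ ε) (hε1 : ε < 1)
    (K : ℕ) (hK : 0 < K)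
    (g : ℕ → Finset V) (hg0 : g 0 = ∅)
    (hstep : ∀ i < K, ∃ z : V, z ∉ g i ∧ g (i + 1) = insert z (g i) ∧
      ∀ y : V, (1 - ε) * (f (insert y (g i)) - f (g i)) ≤ f (insert z (g i)) - f (g i))
    (S : Finset V) (hS : S.card ≤ K) :
    (1 - Real.exp (-(1 - ε))) * f S ≤ f (g K) := by
  have hK1 : (1 : ℝ) ≤ K := by exact_mod_cast hK
  have hr : 0 ≤ 1 - (1 - ε) / K := by
    rw [sub_nonneg, div_le_one (by linarith)]
    linarith
  have hgap : f S - f (g K) ≤ (1 - (1 - ε) / K) ^ K * (f S - f (g 0)) := by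
    refine le_geom (u := fun i ↦ f S - f (g i)) hr K fun i hi ↦ ?_
    obtain ⟨z, -, hgi, hbest⟩ := hstep i hi
    rw [hgi]
    exact gap_insert_le_of_approx_best hmono hsub hε1 hK hS hbest
  have hexp : (1 - (1 - ε) / K) ^ K ≤ Real.exp (-(1 - ε)) :=
    Real.one_sub_div_pow_le_exp_neg (by linarith)
  have hfS : 0 ≤ f S := hempty ▸ hmono ∅ S (empty_subset S)
  rw [hg0, hempty, sub_zero] at hgap
  linarith [mul_le_mul_of_nonneg_right hexp hfS]

/-- Approximate greedy: if at each step the chosen element's marginal gain is at least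
(1-ε) times the best marginal gain, the result is a (1 - e^{-(1-ε)}) approximation. -/
theorem approx_greedy_bound {V : Type*} [DecidableEq V] [Fintype V]
    (f : Finset V → ℝ)
    (hnonneg : ∀ S : Finset V, 0 ≤ f S)
    (hmono : ∀ S T : Finset V, S ⊆ T → f S ≤ f T)
    (hsub : ∀ S T : Finset V, S ⊆ T → ∀ z ∉ T,
      f (insert z T) - f T ≤ f (insert z S) - f S)
    (hempty : f ∅ = 0)
    (ε : ℝ) (hε0 : 0 ≤ ε) (hε1 : ε < 1)
    (K : ℕ) (hK : 0 < K)
    (g : ℕ → Finset V) (hg0 : g 0 = ∅)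
    (hstep : ∀ i < K, ∃ z : V, z ∉ g i ∧ g (i + 1) = insert z (g i) ∧
      ∀ y : V, (1 - ε) * (f (insert y (g i)) - f (g i)) ≤ f (insert z (g i)) - f (g i))
    (S : Finset V) (hS : S.card ≤ K) :
    (1 - Real.exp (-(1 - ε))) * f S ≤ f (g K) :=
  approx_greedy_bound_general f hmono hsub hempty ε hε0 hε1 K hK g hg0 hstep S hS
end

section
/- Let G = (V, E) be a finite directed graph and suppose each edge is independently retained with probability p (a 'pruned' graph). For a fixed source u, the distribution of the set of vertices reachable from u in the pruned graph equals the distribution of the final active set of the independent cascade process on G started at u with constant activation probability p (where each active node gets one chance to activate each out-neighbor, succeeding independently with probability p). -/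
open Finset

variable {V : Type*} [Fintype V] [DecidableEq V]

/-- Nodes reachable from `u` via the live (retained) edges of the pruned graph. -/
noncomputable def prunedReach (E : Finset (V × V)) (c : {e // e ∈ E} → Bool) (u : V) :
    Finset V :=
  open scoped Classical in
  Finset.univ.filter fun x =>
    Relation.ReflTransGen (fun a b => ∃ h : (a, b) ∈ E, c ⟨(a, b), h⟩ = true) u x

/-- One step of the independent cascade process: the state is (previously active,
newly active); every newly active node gets one chance per out-edge, succeeding
exactly when the corresponding coin is heads. -/
noncomputable def cascadeStep (E : Finset (V × V)) (c : {e // e ∈ E} → Bool) :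
    Finset V × Finset V → Finset V × Finset V :=
  open scoped Classical in
  fun st =>
    (st.1 ∪ st.2,
      Finset.univ.filter fun v =>
        v ∉ st.1 ∪ st.2 ∧ ∃ x ∈ st.2, ∃ h : (x, v) ∈ E, c ⟨(x, v), h⟩ = true)

/-- Final active set of the independent cascade started at `u`. -/
noncomputable def cascadeFinal (E : Finset (V × V)) (c : {e // e ∈ E} → Bool) (u : V) :
    Finset V :=
  ((cascadeStep E c)^[Fintype.card V] (∅, {u})).1 ∪
    ((cascadeStep E c)^[Fintype.card V] (∅, {u})).2

/- ----- Auxiliary development: one-step closure operator on vertex sets. ----- -/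

open scoped Classical in
noncomputable def stepSet (R : V → V → Prop) (T : Finset V) : Finset V :=
  T ∪ Finset.univ.filter (fun v => ∃ x ∈ T, R x v)

lemma subset_stepSet (R : V → V → Prop) (T : Finset V) : T ⊆ stepSet R T :=
  Finset.subset_union_left

lemma singleton_subset_iterate (R : V → V → Prop) (u : V) (m : ℕ) :
    ({u} : Finset V) ⊆ (stepSet R)^[m] {u} := by
  induction m with
  | zero => simp
  | succ m ih =>
    rw [Function.iterate_succ_apply']
    exact ih.trans (subset_stepSet R _)

lemma stepSet_fixed (R : V → V → Prop) (T : Finset V) (h : stepSet R T = T) (m : ℕ) :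
    (stepSet R)^[m] T = T := by
  induction m with
  | zero => rfl
  | succ m ih => rw [Function.iterate_succ_apply', ih, h]

lemma stepSet_card_ge (R : V → V → Prop) (u : V) (n : ℕ)
    (h : ∀ k < n, (stepSet R)^[k] ({u} : Finset V) ≠ (stepSet R)^[k+1] {u}) :
    n + 1 ≤ ((stepSet R)^[n] ({u} : Finset V)).card := by
  induction n with
  | zero => simp
  | succ n ih =>
    have h1 := ih (fun k hk => h k (Nat.lt_succ_of_lt hk))
    have h2 : (stepSet R)^[n] ({u} : Finset V) ⊂ (stepSet R)^[n+1] {u} := by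
      rw [Function.iterate_succ_apply']
      refine (subset_stepSet R _).ssubset_of_ne ?_
      have := h n (Nat.lt_succ_self n)
      rw [Function.iterate_succ_apply'] at this
      exact this
    have := Finset.card_lt_card h2
    omega

lemma stepSet_iterate_fixed (R : V → V → Prop) (u : V) :
    stepSet R ((stepSet R)^[Fintype.card V] {u}) = (stepSet R)^[Fintype.card V] {u} := by
  by_cases hex : ∃ k < Fintype.card V, (stepSet R)^[k] ({u} : Finset V) = (stepSet R)^[k+1] {u}
  · obtain ⟨k, hk, he⟩ := hex
    have hfix : stepSet R ((stepSet R)^[k] ({u} : Finset V)) = (stepSet R)^[k] {u} := by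
      conv_rhs => rw [he]
      rw [Function.iterate_succ_apply']
    have key : (stepSet R)^[Fintype.card V] ({u} : Finset V) = (stepSet R)^[k] {u} := by
      have : Fintype.card V = (Fintype.card V - k) + k := by omega
      rw [this, Function.iterate_add_apply]
      exact stepSet_fixed R _ hfix _
    rw [key, hfix]
  · push_neg at hex
    have := stepSet_card_ge R u (Fintype.card V) hex
    have hle : ((stepSet R)^[Fintype.card V] ({u} : Finset V)).card ≤ Fintype.card V :=
      Finset.card_le_univ _
    omega

lemma mem_stepSet_iterate_iff (R : V → V → Prop) (u x : V) :
    x ∈ (stepSet R)^[Fintype.card V] ({u} : Finset V) ↔ Relation.ReflTransGen R u x := by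
  constructor
  · suffices h : ∀ n y, y ∈ (stepSet R)^[n] ({u} : Finset V) → Relation.ReflTransGen R u y from
      h _ x
    intro n
    induction n with
    | zero => intro y hy; simp at hy; subst hy; exact Relation.ReflTransGen.refl
    | succ n ih =>
      intro y hy
      rw [Function.iterate_succ_apply'] at hy
      simp only [stepSet, Finset.mem_union, Finset.mem_filter, Finset.mem_univ, true_and] at hy
      rcases hy with hy | ⟨z, hz, hR⟩
      · exact ih y hy
      · exact (ih z hz).tail hR
  · intro h
    induction h with
    | refl => exact singleton_subset_iterate R u _ (Finset.mem_singleton_self u)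
    | tail _ hR ih =>
      rw [← stepSet_iterate_fixed R u]
      simp only [stepSet, Finset.mem_union, Finset.mem_filter, Finset.mem_univ, true_and]
      exact Or.inr ⟨_, ih, hR⟩

lemma cascade_inv (E : Finset (V × V)) (c : {e // e ∈ E} → Bool) (u : V) (k : ℕ) :
    (∀ x ∈ ((cascadeStep E c)^[k] (∅, {u})).1, ∀ v : V,
       (∃ h : (x, v) ∈ E, c ⟨(x, v), h⟩ = true) →
       v ∈ ((cascadeStep E c)^[k] (∅, {u})).1 ∪ ((cascadeStep E c)^[k] (∅, {u})).2) ∧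
    ((cascadeStep E c)^[k] (∅, {u})).1 ∪ ((cascadeStep E c)^[k] (∅, {u})).2 =
      (stepSet (fun a b => ∃ h : (a, b) ∈ E, c ⟨(a, b), h⟩ = true))^[k] {u} := by
  classical
  set R : V → V → Prop := fun a b => ∃ h : (a, b) ∈ E, c ⟨(a, b), h⟩ = true with hR
  induction k with
  | zero =>
    constructor
    · intro x hx; simp at hx
    · simp
  | succ k ih =>
    obtain ⟨ihJ, ihS⟩ := ih
    set st := (cascadeStep E c)^[k] (∅, ({u} : Finset V)) with hst
    have hiter : (cascadeStep E c)^[k+1] (∅, ({u} : Finset V)) = cascadeStep E c st := by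
      rw [Function.iterate_succ_apply']
    have h1 : (cascadeStep E c st).1 = st.1 ∪ st.2 := rfl
    have h2 : (cascadeStep E c st).2 =
        Finset.univ.filter (fun v =>
          v ∉ st.1 ∪ st.2 ∧ ∃ x ∈ st.2, ∃ h : (x, v) ∈ E, c ⟨(x, v), h⟩ = true) := rfl
    constructor
    · intro x hx v hv
      rw [hiter] at hx ⊢
      rw [h1] at hx
      rw [h1, h2]
      rcases Finset.mem_union.1 hx with hx1 | hx2
      · have := ihJ x hx1 v hv
        exact Finset.mem_union_left _ this
      · by_cases hvin : v ∈ st.1 ∪ st.2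
        · exact Finset.mem_union_left _ hvin
        · refine Finset.mem_union_right _ ?_
          simp only [Finset.mem_filter, Finset.mem_univ, true_and]
          exact ⟨hvin, x, hx2, hv⟩
    · rw [hiter, h1, h2, Function.iterate_succ_apply', ← ihS]
      ext v
      simp only [stepSet, Finset.mem_union, Finset.mem_filter, Finset.mem_univ, true_and]
      constructor
      · rintro (hv | ⟨hnv, x, hx, hRxv⟩)
        · exact Or.inl hv
        · exact Or.inr ⟨x, Or.inr hx, hRxv⟩
      · rintro (hv | ⟨x, hx, hRxv⟩)
        · exact Or.inl hv
        · by_cases hvin : v ∈ st.1 ∪ st.2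
          · exact Or.inl (Finset.mem_union.1 hvin)
          · rcases hx with hx1 | hx2
            · exact absurd (ihJ x hx1 v hRxv) hvin
            · exact Or.inr ⟨fun h => hvin (Finset.mem_union.2 h), x, hx2, hRxv⟩

lemma cascadeFinal_eq_prunedReach (E : Finset (V × V)) (c : {e // e ∈ E} → Bool) (u : V) :
    cascadeFinal E c u = prunedReach E c u := by
  classical
  have h := (cascade_inv E c u (Fintype.card V)).2
  rw [cascadeFinal, h]
  ext x
  rw [mem_stepSet_iterate_iff]
  simp [prunedReach]

/-- The set reachable from `u` in the pruned graph (each edge retained independently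
with probability p) has the same distribution as the final active set of the
independent cascade on G started at `u` with activation probability p. -/
theorem pruned_graph_eq_cascade_distribution
    (E : Finset (V × V)) (p : ℝ) (hp0 : 0 ≤ p) (hp1 : p ≤ 1) (u : V) (S : Finset V) :
    (∑ c : {e // e ∈ E} → Bool,
        if prunedReach E c u = S then ∏ e : {e // e ∈ E}, (if c e then p else 1 - p) else 0) =
    (∑ c : {e // e ∈ E} → Bool,
        if cascadeFinal E c u = S then ∏ e : {e // e ∈ E}, (if c e then p else 1 - p) else 0) := by
  refine Finset.sum_congr rfl fun c _ => ?_
  rw [cascadeFinal_eq_prunedReach]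
end

section
/- In the independent cascade model on a finite directed graph G with constant activation probability p, the expected size σ(A) of the final active set, as a function of the initial active set A, is nonnegative, monotone, and submodular. -/
open Finset

variable {V : Type*} [Fintype V] [DecidableEq V]

/-- Nodes reachable from the seed set `A` via the live edges of the pruned graph. -/
noncomputable def liveReachFrom (E : Finset (V × V)) (c : {e // e ∈ E} → Bool)
    (A : Finset V) : Finset V :=
  open scoped Classical in
  Finset.univ.filter fun x => ∃ a ∈ A,
    Relation.ReflTransGen (fun u v => ∃ h : (u, v) ∈ E, c ⟨(u, v), h⟩ = true) a x

/-- Expected final active set size of the independent cascade with constant activation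
probability `p`, via the live-edge (pruned-graph) representation. -/
noncomputable def cascadeSigma (E : Finset (V × V)) (p : ℝ) (A : Finset V) : ℝ :=
  ∑ c : {e // e ∈ E} → Bool,
    (∏ e : {e // e ∈ E}, (if c e then p else 1 - p)) * (liveReachFrom E c A).card

lemma liveReachFrom_mono (E : Finset (V × V)) (c : {e // e ∈ E} → Bool)
    {A B : Finset V} (h : A ⊆ B) : liveReachFrom E c A ⊆ liveReachFrom E c B := by
  classical
  intro x hx
  simp only [liveReachFrom, Finset.mem_filter, Finset.mem_univ, true_and] at hx ⊢
  obtain ⟨a, ha, hr⟩ := hx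
  exact ⟨a, h ha, hr⟩

lemma liveReachFrom_insert (E : Finset (V × V)) (c : {e // e ∈ E} → Bool)
    (z : V) (A : Finset V) :
    liveReachFrom E c (insert z A) = liveReachFrom E c {z} ∪ liveReachFrom E c A := by
  classical
  ext x
  simp only [liveReachFrom, Finset.mem_filter, Finset.mem_univ, true_and,
    Finset.mem_union, Finset.mem_insert, Finset.mem_singleton]
  constructor
  · rintro ⟨a, ha | ha, hr⟩
    · exact Or.inl ⟨a, ha, hr⟩
    · exact Or.inr ⟨a, ha, hr⟩
  · rintro (⟨a, ha, hr⟩ | ⟨a, ha, hr⟩)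
    · exact ⟨a, Or.inl ha, hr⟩
    · exact ⟨a, Or.inr ha, hr⟩

lemma weight_nonneg (E : Finset (V × V)) {p : ℝ} (hp0 : 0 ≤ p) (hp1 : p ≤ 1)
    (c : {e // e ∈ E} → Bool) :
    0 ≤ ∏ e : {e // e ∈ E}, (if c e then p else 1 - p) := by
  apply Finset.prod_nonneg
  intro e _
  split <;> linarith

/-- In the independent cascade model the expected final active set size σ(A) is
nonnegative, monotone, and submodular in the initial active set A. -/
theorem cascade_sigma_nonneg_monotone_submodular
    (E : Finset (V × V)) (p : ℝ) (hp0 : 0 ≤ p) (hp1 : p ≤ 1) :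
    (∀ A : Finset V, 0 ≤ cascadeSigma E p A) ∧
    (∀ A B : Finset V, A ⊆ B → cascadeSigma E p A ≤ cascadeSigma E p B) ∧
    (∀ A B : Finset V, A ⊆ B → ∀ z ∉ B,
      cascadeSigma E p (insert z B) - cascadeSigma E p B ≤
        cascadeSigma E p (insert z A) - cascadeSigma E p A) := by
  classical
  refine ⟨?_, ?_, ?_⟩
  · intro A
    apply Finset.sum_nonneg
    intro c _
    exact mul_nonneg (weight_nonneg E hp0 hp1 c) (Nat.cast_nonneg _)
  · intro A B hAB
    apply Finset.sum_le_sum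
    intro c _
    apply mul_le_mul_of_nonneg_left _ (weight_nonneg E hp0 hp1 c)
    exact_mod_cast Finset.card_le_card (liveReachFrom_mono E c hAB)
  · intro A B hAB z _
    unfold cascadeSigma
    rw [← Finset.sum_sub_distrib, ← Finset.sum_sub_distrib]
    apply Finset.sum_le_sum
    intro c _
    rw [← mul_sub, ← mul_sub]
    apply mul_le_mul_of_nonneg_left _ (weight_nonneg E hp0 hp1 c)
    have key : ∀ S : Finset V,
        ((liveReachFrom E c (insert z S)).card : ℝ) - (liveReachFrom E c S).card
          = ((liveReachFrom E c {z} \ liveReachFrom E c S).card : ℝ) := by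
      intro S
      rw [liveReachFrom_insert]
      have := Finset.card_sdiff_add_card (liveReachFrom E c {z}) (liveReachFrom E c S)
      push_cast [← this]
      ring
    rw [key A, key B]
    have hsub : liveReachFrom E c {z} \ liveReachFrom E c B ⊆
        liveReachFrom E c {z} \ liveReachFrom E c A :=
      Finset.sdiff_subset_sdiff (Finset.Subset.refl _) (liveReachFrom_mono E c hAB)
    exact_mod_cast Finset.card_le_card hsub
end
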